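/- Let α > 0 and p > 1. At every point (z,σ) ∈ ℝ^N ∖ {(0,0)} with z ≠ 0 and σ ≠ 0 one has Φ(∇_z ρ) ⟨∇Φ(∇_z ρ), ∇_z[(Φ⁰(z)/ρ)^{α(p−2)}]⟩ + (Φ⁰(z)^{2α}/4) Ψ(∇_σ ρ) ⟨∇Ψ(∇_σ ρ), ∇_σ[(Φ⁰(z)/ρ)^{α(p−2)}]⟩ = 0, where ρ = ρ(z,σ). -/

import Mathlib

open Real MeasureTheory
open scoped RealInnerProductSpace

noncomputable section

abbrev Euc (n : ℕ) := EuclideanSpace ℝ (Fin n)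

/-- A Minkowski norm on `ℝⁿ`: nonnegative, absolutely homogeneous, with `N²` of class `C²`
away from the origin and strictly convex. -/
def IsMinkowskiNorm {n : ℕ} (N : Euc n → ℝ) : Prop :=
  (∀ x, 0 ≤ N x) ∧ (∀ (l : ℝ) (x : Euc n), N (l • x) = |l| * N x) ∧
  ContDiffOn ℝ 2 (fun x => (N x) ^ 2) {(0 : Euc n)}ᶜ ∧
  StrictConvexOn ℝ Set.univ (fun x => (N x) ^ 2)

/-- The Legendre transform (dual norm) `N⁰(x) = sup { ⟨x,ξ⟩ : N(ξ) = 1 }`. -/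
def dualNorm {n : ℕ} (N : Euc n → ℝ) (x : Euc n) : ℝ :=
  sSup ((fun ξ => ⟪x, ξ⟫) '' {ξ | N ξ = 1})

variable {m k : ℕ}

/-- The dual anisotropic Minkowski gauge
`ρ(z,σ) = (Φ⁰(z)^{2(α+1)} + 4(α+1)²Ψ⁰(σ)²)^{1/(2(α+1))}`. -/
def rho (α : ℝ) (Φ : Euc m → ℝ) (Ψ : Euc k → ℝ) (x : Euc m × Euc k) : ℝ :=
  (dualNorm Φ x.1 ^ (2 * (α + 1)) + 4 * (α + 1) ^ 2 * dualNorm Ψ x.2 ^ 2) ^ (1 / (2 * (α + 1)))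

/-- Gradient in the `z` variables. -/
def gradZ (u : Euc m × Euc k → ℝ) (x : Euc m × Euc k) : Euc m :=
  gradient (fun z => u (z, x.2)) x.1

/-- Gradient in the `σ` variables. -/
def gradS (u : Euc m × Euc k → ℝ) (x : Euc m × Euc k) : Euc k :=
  gradient (fun σ => u (x.1, σ)) x.2

/-- Divergence in the `z` variables. -/
def divZ (V : Euc m × Euc k → Euc m) (x : Euc m × Euc k) : ℝ :=
  ∑ i, fderiv ℝ (fun z => V (z, x.2) i) x.1 (EuclideanSpace.single i 1)

/-- Divergence in the `σ` variables. -/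
def divS (V : Euc m × Euc k → Euc k) (x : Euc m × Euc k) : ℝ :=
  ∑ i, fderiv ℝ (fun σ => V (x.1, σ) i) x.2 (EuclideanSpace.single i 1)

/-- The Finsler Laplacian in the `z` variables, `Δ_Φ(u) = div_z(Φ(∇_z u) ∇Φ(∇_z u))`. -/
def finslerLapZ (Φ : Euc m → ℝ) (u : Euc m × Euc k → ℝ) (x : Euc m × Euc k) : ℝ :=
  divZ (fun y => Φ (gradZ u y) • gradient Φ (gradZ u y)) x

/-- The Finsler Laplacian in the `σ` variables, `Δ_Ψ(u) = div_σ(Ψ(∇_σ u) ∇Ψ(∇_σ u))`. -/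
def finslerLapS (Ψ : Euc k → ℝ) (u : Euc m × Euc k → ℝ) (x : Euc m × Euc k) : ℝ :=
  divS (fun y => Ψ (gradS u y) • gradient Ψ (gradS u y)) x

/-- The operator `𝓛_{α,p}`. -/
def Lop (α p : ℝ) (Φ : Euc m → ℝ) (Ψ : Euc k → ℝ) (u : Euc m × Euc k → ℝ)
    (x : Euc m × Euc k) : ℝ :=
  divZ (fun y =>
      (Φ (gradZ u y) ^ 2 + dualNorm Φ y.1 ^ (2 * α) / 4 * Ψ (gradS u y) ^ 2) ^ ((p - 2) / 2) •
        (Φ (gradZ u y) • gradient Φ (gradZ u y))) x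
  + divS (fun y =>
      (Φ (gradZ u y) ^ 2 + dualNorm Φ y.1 ^ (2 * α) / 4 * Ψ (gradS u y) ^ 2) ^ ((p - 2) / 2) •
        ((dualNorm Φ y.1 ^ (2 * α) / 4 * Ψ (gradS u y)) • gradient Ψ (gradS u y))) x

/-- The operator `𝓛_{α,2}(u) = Δ_Φ(u) + (Φ⁰(z)^{2α}/4) Δ_Ψ(u)`. -/
def Lop2 (α : ℝ) (Φ : Euc m → ℝ) (Ψ : Euc k → ℝ) (u : Euc m × Euc k → ℝ)
    (x : Euc m × Euc k) : ℝ :=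
  finslerLapZ Φ u x + dualNorm Φ x.1 ^ (2 * α) / 4 * finslerLapS Ψ u x

/-!
Write `u = Φ⁰(z)`, `v = Ψ⁰(σ)`. By Danskin's theorem `∇Φ⁰(z)` is the unique maximizer `ξ` of
`⟪z, ·⟫` on `{Φ = 1}`, and by the Lagrange condition `∇Φ(ξ) = z / u`; the same holds for `Ψ`.
Hence the partial gradients of any function `F(u, v)` are `F_u ξ` and `F_v η`, and the left-hand
side collapses to `ρ_u w_u + (u^{2α}/4) ρ_v w_v` with `w = (u/ρ)^{α(p-2)}`. As `w` is a function of
`u/ρ`, this is a multiple of `ρ ρ_u - u (ρ_u² + (u^{2α}/4) ρ_v²)`, which vanishes by the eikonal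
equation `ρ_u² + (u^{2α}/4) ρ_v² = (u/ρ)^{2α} = ρ ρ_u / u` of the gauge.
-/

theorem dualNorm_eq_inner_of_isMaxOn {n : ℕ} {N : Euc n → ℝ} {z ξ : Euc n} (hξ : N ξ = 1)
    (hmax : IsMaxOn (⟪z, ·⟫) {w | N w = 1} ξ) : dualNorm N z = ⟪z, ξ⟫ :=
  IsGreatest.csSup_eq ⟨⟨ξ, hξ, rfl⟩, by rintro _ ⟨w, hw, rfl⟩; exact hmax hw⟩

namespace IsMinkowskiNorm

variable {n : ℕ} {N : Euc n → ℝ} {z ξ : Euc n}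

theorem map_smul_of_nonneg (hN : IsMinkowskiNorm N) {l : ℝ} (hl : 0 ≤ l) (x : Euc n) :
    N (l • x) = l * N x := by
  rw [hN.2.1, abs_of_nonneg hl]

theorem map_zero (hN : IsMinkowskiNorm N) : N 0 = 0 := by
  simpa using hN.map_smul_of_nonneg le_rfl 0

theorem pos (hN : IsMinkowskiNorm N) {x : Euc n} (hx : x ≠ 0) : 0 < N x := by
  have h := hN.2.2.2.2 (Set.mem_univ x) (Set.mem_univ 0) hx one_half_pos one_half_pos
    (add_halves 1)
  simp only [smul_zero, add_zero, hN.map_smul_of_nonneg one_half_pos.le, hN.map_zero,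
    smul_eq_mul] at h
  exact (hN.1 x).lt_of_ne fun h0 => by rw [← h0] at h; norm_num at h

theorem map_inv_smul_self (hN : IsMinkowskiNorm N) {x : Euc n} (hx : x ≠ 0) :
    N ((N x)⁻¹ • x) = 1 := by
  rw [hN.map_smul_of_nonneg (inv_nonneg.2 (hN.1 x)), inv_mul_cancel₀ (hN.pos hx).ne']

theorem continuous (hN : IsMinkowskiNorm N) : Continuous N := by
  have hsq : Continuous fun x => N x ^ 2 :=
    continuousOn_univ.1 (hN.2.2.2.convexOn.continuousOn isOpen_univ)
  simpa only [Real.sqrt_sq (hN.1 _)] using hsq.sqrt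

theorem differentiableAt (hN : IsMinkowskiNorm N) {x : Euc n} (hx : x ≠ 0) :
    DifferentiableAt ℝ N x := by
  have hsq : DifferentiableAt ℝ (fun y => N y ^ 2) x :=
    (hN.2.2.1.contDiffAt (isOpen_compl_singleton.mem_nhds hx)).differentiableAt two_ne_zero
  simpa only [Real.sqrt_sq (hN.1 _)] using hsq.sqrt (pow_pos (hN.pos hx) 2).ne'

theorem gradient_smul_of_pos (hN : IsMinkowskiNorm N) {x : Euc n} (hx : x ≠ 0) {c : ℝ}
    (hc : 0 < c) : gradient N (c • x) = gradient N x := by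
  have hcomp : HasFDerivAt (fun y => N (c • y)) ((fderiv ℝ N (c • x)).comp
      (c • ContinuousLinearMap.id ℝ (Euc n))) x :=
    (hN.differentiableAt (smul_ne_zero hc.ne' hx)).hasFDerivAt.comp x
      (c • ContinuousLinearMap.id ℝ (Euc n)).hasFDerivAt
  have hmul : HasFDerivAt (fun y => N (c • y)) (c • fderiv ℝ N x) x := by
    simpa only [hN.map_smul_of_nonneg hc.le] using
      (hN.differentiableAt hx).hasFDerivAt.const_mul c
  have h := hcomp.unique hmul
  rw [ContinuousLinearMap.comp_smul, ContinuousLinearMap.comp_id] at h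
  simp only [gradient, smul_right_injective _ hc.ne' h]

theorem exists_mul_norm_le [Nontrivial (Euc n)] (hN : IsMinkowskiNorm N) :
    ∃ c > 0, ∀ x : Euc n, c * ‖x‖ ≤ N x := by
  obtain ⟨x₀, hx₀, hmin⟩ := (isCompact_sphere (0 : Euc n) 1).exists_isMinOn
    (NormedSpace.sphere_nonempty.2 zero_le_one) hN.continuous.continuousOn
  have hx₀ne : x₀ ≠ 0 := ne_zero_of_mem_unit_sphere ⟨x₀, hx₀⟩
  refine ⟨N x₀, hN.pos hx₀ne, fun x => ?_⟩
  rcases eq_or_ne x 0 with rfl | hx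
  · simp [hN.map_zero]
  have hnx : 0 < ‖x‖ := norm_pos_iff.2 hx
  have hmem : ‖x‖⁻¹ • x ∈ Metric.sphere (0 : Euc n) 1 := by
    simp [norm_smul, hnx.ne']
  calc N x₀ * ‖x‖ ≤ N (‖x‖⁻¹ • x) * ‖x‖ := by gcongr; exact hmin hmem
    _ = N x := by
      rw [hN.map_smul_of_nonneg (inv_nonneg.2 hnx.le)]; field_simp

theorem isCompact_unitSet (hN : IsMinkowskiNorm N) : IsCompact {ξ : Euc n | N ξ = 1} := by
  rcases subsingleton_or_nontrivial (Euc n) with h | h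
  · exact Set.subsingleton_of_subsingleton.isCompact
  obtain ⟨c, hc, hle⟩ := hN.exists_mul_norm_le
  refine (isCompact_closedBall (0 : Euc n) c⁻¹).of_isClosed_subset
    (isClosed_eq hN.continuous continuous_const) fun ξ hξ => ?_
  rw [mem_closedBall_zero_iff, ← mul_one c⁻¹, le_inv_mul_iff₀ hc]
  exact hξ ▸ hle ξ


theorem exists_isMaxOn_inner [Nontrivial (Euc n)] (hN : IsMinkowskiNorm N) (z : Euc n) :
    ∃ ξ, N ξ = 1 ∧ IsMaxOn (⟪z, ·⟫) {w | N w = 1} ξ :=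
  have ⟨_, hx⟩ := exists_ne (0 : Euc n)
  hN.isCompact_unitSet.exists_isMaxOn ⟨_, hN.map_inv_smul_self hx⟩
    (continuous_const.inner (𝕜 := ℝ) continuous_id).continuousOn

theorem inner_le_inner_mul_of_isMaxOn (hN : IsMinkowskiNorm N)
    (hmax : IsMaxOn (⟪z, ·⟫) {w | N w = 1} ξ) (v : Euc n) : ⟪z, v⟫ ≤ ⟪z, ξ⟫ * N v := by
  rcases eq_or_ne v 0 with rfl | hv
  · simp [hN.map_zero]
  have hle : ⟪z, (N v)⁻¹ • v⟫ ≤ ⟪z, ξ⟫ := hmax (hN.map_inv_smul_self hv)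
  rw [real_inner_smul_right, inv_mul_le_iff₀ (hN.pos hv)] at hle
  linarith

theorem inner_pos_of_isMaxOn (hN : IsMinkowskiNorm N) (hz : z ≠ 0)
    (hmax : IsMaxOn (⟪z, ·⟫) {w | N w = 1} ξ) : 0 < ⟪z, ξ⟫ := by
  have h := hN.inner_le_inner_mul_of_isMaxOn hmax z
  rw [real_inner_self_eq_norm_sq] at h
  exact pos_of_mul_pos_left ((pow_pos (norm_pos_iff.2 hz) 2).trans_le h) (hN.1 z)

/-- Strict convexity of `N²` makes the maximizer unique: the midpoint of two maximizers would
have `N < 1`, and rescaling it to the unit sphere would beat the maximum. -/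
theorem eq_of_isMaxOn_inner (hN : IsMinkowskiNorm N) (hz : z ≠ 0) {ξ₁ ξ₂ : Euc n}
    (hξ₁ : N ξ₁ = 1) (hmax₁ : IsMaxOn (⟪z, ·⟫) {w | N w = 1} ξ₁)
    (hξ₂ : N ξ₂ = 1) (hmax₂ : IsMaxOn (⟪z, ·⟫) {w | N w = 1} ξ₂) : ξ₁ = ξ₂ := by
  by_contra hne
  have heq : ⟪z, ξ₁⟫ = ⟪z, ξ₂⟫ := le_antisymm (hmax₂ hξ₁) (hmax₁ hξ₂)
  set μ := (1 / 2 : ℝ) • ξ₁ + (1 / 2 : ℝ) • ξ₂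
  have hμ : N μ ^ 2 < 1 := by
    have h := hN.2.2.2.2 (Set.mem_univ ξ₁) (Set.mem_univ ξ₂) hne one_half_pos one_half_pos
      (add_halves 1)
    simp only [hξ₁, hξ₂, smul_eq_mul] at h
    linarith
  have hμ1 : N μ < 1 := by nlinarith [hN.1 μ]
  have hinner : ⟪z, μ⟫ = ⟪z, ξ₁⟫ := by
    simp only [μ, inner_add_right, real_inner_smul_right, ← heq]; ring
  have h := hN.inner_le_inner_mul_of_isMaxOn hmax₁ μ
  rw [hinner] at h
  nlinarith [hN.inner_pos_of_isMaxOn hz hmax₁]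

/-- Lagrange multipliers: `ξ` maximizes `⟪z, v⟫ - ⟪z, ξ⟫ * N v`. -/
theorem gradient_eq_of_isMaxOn_inner (hN : IsMinkowskiNorm N) (hz : z ≠ 0) (hξ : N ξ = 1)
    (hmax : IsMaxOn (⟪z, ·⟫) {w | N w = 1} ξ) : gradient N ξ = ⟪z, ξ⟫⁻¹ • z := by
  set s := ⟪z, ξ⟫
  have hξ0 : ξ ≠ 0 := by rintro rfl; simp [hN.map_zero] at hξ
  have hloc : IsLocalMax (fun v => ⟪z, v⟫ - s * N v) ξ :=
    Filter.Eventually.of_forall fun v => by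
      simp only [hξ, mul_one]
      linarith [hN.inner_le_inner_mul_of_isMaxOn hmax v]
  have hderiv := hloc.hasFDerivAt_eq_zero
    (((innerSL ℝ z).hasFDerivAt).sub ((hN.differentiableAt hξ0).hasFDerivAt.const_mul s))
  have hz_eq : z = s • gradient N ξ := ext_inner_right ℝ fun w => by
    have h := congrArg (· w) hderiv
    simp only [sub_apply, smul_apply, innerSL_apply_apply, zero_apply, smul_eq_mul] at h
    rw [real_inner_smul_left, inner_gradient_left]
    linarith
  rw [hz_eq, inv_smul_smul₀ (hN.inner_pos_of_isMaxOn hz hmax).ne']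

theorem continuousAt_of_isMaxOn_inner (hN : IsMinkowskiNorm N) {sel : Euc n → Euc n}
    (hsel : ∀ y, N (sel y) = 1) (hmax : ∀ y, IsMaxOn (⟪y, ·⟫) {w | N w = 1} (sel y))
    (hz : z ≠ 0) : ContinuousAt sel z := by
  refine hN.isCompact_unitSet.tendsto_nhds_of_unique_mapClusterPt
    (Filter.Eventually.of_forall hsel) fun a ha hclust => ?_
  obtain ⟨y, hya, hyz⟩ := hclust.exists_seq_tendsto
  have hamax : IsMaxOn (⟪z, ·⟫) {w | N w = 1} a := fun w (hw : N w = 1) =>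
    show ⟪z, w⟫ ≤ ⟪z, a⟫ from le_of_tendsto_of_tendsto' (hyz.inner tendsto_const_nhds)
      (hyz.inner hya) fun j => hmax (y j) hw
  exact hN.eq_of_isMaxOn_inner hz ha hamax (hsel z) (hmax z)

/-- Danskin's theorem: the remainder `N⁰ y - N⁰ z - ⟪ξ, y - z⟫` lies between `0` and
`⟪y - z, ξ_y - ξ⟫` for the maximizer `ξ_y` at `y`, which is continuous in `y`. -/
theorem hasGradientAt_dualNorm (hN : IsMinkowskiNorm N) (hz : z ≠ 0) (hξ : N ξ = 1)
    (hmax : IsMaxOn (⟪z, ·⟫) {w | N w = 1} ξ) : HasGradientAt (dualNorm N) ξ z := by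
  have := nontrivial_of_ne z 0 hz
  choose sel hsel hselmax using hN.exists_isMaxOn_inner
  have hsel_z : sel z = ξ := hN.eq_of_isMaxOn_inner hz (hsel z) (hselmax z) hξ hmax
  have hcont := hN.continuousAt_of_isMaxOn_inner hsel hselmax hz
  rw [hasGradientAt_iff_isLittleO, Asymptotics.isLittleO_iff]
  intro c hc
  filter_upwards [hcont (Metric.ball_mem_nhds _ hc)] with y hy
  rw [hsel_z, Set.mem_preimage, Metric.mem_ball, dist_eq_norm] at hy
  rw [dualNorm_eq_inner_of_isMaxOn (hsel y) (hselmax y), dualNorm_eq_inner_of_isMaxOn hξ hmax]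
  have hlow : ⟪y, ξ⟫ ≤ ⟪y, sel y⟫ := hselmax y hξ
  have hup : ⟪z, sel y⟫ ≤ ⟪z, ξ⟫ := hmax (hsel y)
  have hcs : ⟪y - z, sel y - ξ⟫ ≤ ‖y - z‖ * ‖sel y - ξ‖ := real_inner_le_norm _ _
  have hexp : ⟪y - z, sel y - ξ⟫ = ⟪y, sel y⟫ - ⟪z, sel y⟫ - (⟪y, ξ⟫ - ⟪z, ξ⟫) := by
    simp only [inner_sub_left, inner_sub_right]
  rw [real_inner_comm (y - z) ξ, inner_sub_left, Real.norm_eq_abs, abs_le]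
  constructor <;> nlinarith [norm_nonneg (y - z)]


theorem dualNorm_pos (hN : IsMinkowskiNorm N) (hz : z ≠ 0) : 0 < dualNorm N z := by
  have := nontrivial_of_ne z 0 hz
  obtain ⟨ξ, hξ, hmax⟩ := hN.exists_isMaxOn_inner z
  exact dualNorm_eq_inner_of_isMaxOn hξ hmax ▸ hN.inner_pos_of_isMaxOn hz hmax

theorem inner_gradient_smul_of_isMaxOn (hN : IsMinkowskiNorm N) (hz : z ≠ 0) (hξ : N ξ = 1)
    (hmax : IsMaxOn (⟪z, ·⟫) {w | N w = 1} ξ) {a : ℝ} (ha : 0 < a) (b : ℝ) :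
    ⟪gradient N (a • ξ), b • ξ⟫ = b := by
  have hξ0 : ξ ≠ 0 := by rintro rfl; simp [hN.map_zero] at hξ
  rw [hN.gradient_smul_of_pos hξ0 ha, hN.gradient_eq_of_isMaxOn_inner hz hξ hmax,
    real_inner_smul_left, real_inner_smul_right]
  field_simp [(hN.inner_pos_of_isMaxOn hz hmax).ne']

end IsMinkowskiNorm

theorem HasDerivAt.comp_hasGradientAt {E : Type*} [NormedAddCommGroup E] [InnerProductSpace ℝ E]
    [CompleteSpace E] {f : E → ℝ} {f' x : E} {g : ℝ → ℝ} {g' : ℝ} (hg : HasDerivAt g g' (f x))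
    (hf : HasGradientAt f f' x) : HasGradientAt (fun y => g (f y)) (g' • f') x := by
  rw [hasGradientAt_iff_hasFDerivAt] at hf ⊢
  rw [map_smul]
  exact hg.comp_hasFDerivAt x hf

section PartialGradients

variable {m k : ℕ} {f : Euc m → ℝ} {g : Euc k → ℝ} {F : ℝ → ℝ → ℝ} {x : Euc m × Euc k}
  {F' : ℝ}

theorem gradZ_comp {f' : Euc m} (hf : HasGradientAt f f' x.1)
    (hF : HasDerivAt (F · (g x.2)) F' (f x.1)) :
    gradZ (fun y => F (f y.1) (g y.2)) x = F' • f' :=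
  (hF.comp_hasGradientAt hf).gradient

theorem gradS_comp {g' : Euc k} (hg : HasGradientAt g g' x.2)
    (hF : HasDerivAt (F (f x.1)) F' (g x.2)) :
    gradS (fun y => F (f y.1) (g y.2)) x = F' • g' :=
  (hF.comp_hasGradientAt hg).gradient

end PartialGradients

theorem pairing_comp_dualNorm {m k : ℕ} {Φ : Euc m → ℝ} {Ψ : Euc k → ℝ}
    (hΦ : IsMinkowskiNorm Φ) (hΨ : IsMinkowskiNorm Ψ) {x : Euc m × Euc k} (hz : x.1 ≠ 0)
    (hσ : x.2 ≠ 0) {F G : ℝ → ℝ → ℝ} {Fs Ft Gs Gt : ℝ}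
    (hFs : HasDerivAt (F · (dualNorm Ψ x.2)) Fs (dualNorm Φ x.1))
    (hFt : HasDerivAt (F (dualNorm Φ x.1)) Ft (dualNorm Ψ x.2))
    (hGs : HasDerivAt (G · (dualNorm Ψ x.2)) Gs (dualNorm Φ x.1))
    (hGt : HasDerivAt (G (dualNorm Φ x.1)) Gt (dualNorm Ψ x.2))
    (hFs_pos : 0 < Fs) (hFt_pos : 0 < Ft) (c : ℝ) :
    Φ (gradZ (fun y => F (dualNorm Φ y.1) (dualNorm Ψ y.2)) x) *
        ⟪gradient Φ (gradZ (fun y => F (dualNorm Φ y.1) (dualNorm Ψ y.2)) x),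
          gradZ (fun y => G (dualNorm Φ y.1) (dualNorm Ψ y.2)) x⟫
      + c * Ψ (gradS (fun y => F (dualNorm Φ y.1) (dualNorm Ψ y.2)) x) *
        ⟪gradient Ψ (gradS (fun y => F (dualNorm Φ y.1) (dualNorm Ψ y.2)) x),
          gradS (fun y => G (dualNorm Φ y.1) (dualNorm Ψ y.2)) x⟫
      = Fs * Gs + c * Ft * Gt := by
  have := nontrivial_of_ne x.1 0 hz
  have := nontrivial_of_ne x.2 0 hσ
  obtain ⟨ξ, hξ, hξmax⟩ := hΦ.exists_isMaxOn_inner x.1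
  obtain ⟨η, hη, hηmax⟩ := hΨ.exists_isMaxOn_inner x.2
  have hgradΦ := hΦ.hasGradientAt_dualNorm hz hξ hξmax
  have hgradΨ := hΨ.hasGradientAt_dualNorm hσ hη hηmax
  rw [gradZ_comp hgradΦ hFs, gradS_comp hgradΨ hFt, gradZ_comp hgradΦ hGs,
    gradS_comp hgradΨ hGt, hΦ.map_smul_of_nonneg hFs_pos.le, hξ,
    hΨ.map_smul_of_nonneg hFt_pos.le, hη, hΦ.inner_gradient_smul_of_isMaxOn hz hξ hξmax hFs_pos,
    hΨ.inner_gradient_smul_of_isMaxOn hσ hη hηmax hFt_pos]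
  ring

/-- `rho α Φ Ψ x = gaugeProfile α (dualNorm Φ x.1) (dualNorm Ψ x.2)` holds by `rfl`. -/
def gaugeProfile (α s t : ℝ) : ℝ :=
  (s ^ (2 * (α + 1)) + 4 * (α + 1) ^ 2 * t ^ 2) ^ (1 / (2 * (α + 1)))

section GaugeProfile

variable {α s : ℝ}

theorem gaugeProfile_base_pos (hs : 0 < s) (t : ℝ) :
    0 < s ^ (2 * (α + 1)) + 4 * (α + 1) ^ 2 * t ^ 2 := by
  have := Real.rpow_pos_of_pos hs (2 * (α + 1))
  positivity

theorem gaugeProfile_pos (hs : 0 < s) (t : ℝ) : 0 < gaugeProfile α s t :=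
  Real.rpow_pos_of_pos (gaugeProfile_base_pos hs t) _

theorem gaugeProfile_rpow (hα : α + 1 ≠ 0) (hs : 0 < s) (t : ℝ) :
    gaugeProfile α s t ^ (2 * (α + 1)) = s ^ (2 * (α + 1)) + 4 * (α + 1) ^ 2 * t ^ 2 := by
  rw [gaugeProfile, one_div, Real.rpow_inv_rpow (gaugeProfile_base_pos hs t).le (by positivity)]

theorem rpow_two_mul_add_one (α : ℝ) {x : ℝ} (hx : 0 < x) :
    x ^ (2 * (α + 1)) = x ^ (2 * α + 1) * x := by
  rw [← Real.rpow_add_one hx.ne']; ring_nf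

theorem hasDerivAt_gaugeProfile_fst (hα : α + 1 ≠ 0) (hs : 0 < s) (t : ℝ) :
    HasDerivAt (gaugeProfile α · t) ((s / gaugeProfile α s t) ^ (2 * α + 1)) s := by
  have hbase : HasDerivAt (fun s => s ^ (2 * (α + 1)) + 4 * (α + 1) ^ 2 * t ^ 2)
      (2 * (α + 1) * s ^ (2 * (α + 1) - 1)) s :=
    (Real.hasDerivAt_rpow_const (Or.inl hs.ne')).add_const _
  refine (hbase.rpow_const (p := 1 / (2 * (α + 1))) (Or.inl (gaugeProfile_base_pos hs t).ne')
    ).congr_deriv ?_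
  have hR := gaugeProfile_pos (α := α) hs t
  have hq := gaugeProfile_rpow hα hs t
  rw [rpow_two_mul_add_one α hR] at hq
  rw [Real.rpow_sub_one (gaugeProfile_base_pos hs t).ne', ← gaugeProfile.eq_1, ← hq,
    Real.div_rpow hs.le hR.le, show 2 * (α + 1) - 1 = 2 * α + 1 by ring]
  field_simp

theorem hasDerivAt_gaugeProfile_snd (hα : α + 1 ≠ 0) (hs : 0 < s) (t : ℝ) :
    HasDerivAt (gaugeProfile α s ·) (4 * (α + 1) * t / gaugeProfile α s t ^ (2 * α + 1)) t := by
  have hbase : HasDerivAt (fun t => s ^ (2 * (α + 1)) + 4 * (α + 1) ^ 2 * t ^ 2)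
      (4 * (α + 1) ^ 2 * (2 * t)) t := by
    simpa using ((hasDerivAt_pow 2 t).const_mul (4 * (α + 1) ^ 2)).const_add (s ^ (2 * (α + 1)))
  refine (hbase.rpow_const (p := 1 / (2 * (α + 1))) (Or.inl (gaugeProfile_base_pos hs t).ne')
    ).congr_deriv ?_
  have hR := gaugeProfile_pos (α := α) hs t
  have hq := gaugeProfile_rpow hα hs t
  rw [rpow_two_mul_add_one α hR] at hq
  rw [Real.rpow_sub_one (gaugeProfile_base_pos hs t).ne', ← gaugeProfile.eq_1, ← hq]
  field_simp

theorem gaugeProfile_eikonal (hα : α + 1 ≠ 0) (hs : 0 < s) (t : ℝ) :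
    ((s / gaugeProfile α s t) ^ (2 * α + 1)) ^ 2
      + s ^ (2 * α) / 4 * (4 * (α + 1) * t / gaugeProfile α s t ^ (2 * α + 1)) ^ 2
      = (s / gaugeProfile α s t) ^ (2 * α) := by
  have hR := gaugeProfile_pos (α := α) hs t
  have hq := gaugeProfile_rpow hα hs t
  rw [rpow_two_mul_add_one α hR, rpow_two_mul_add_one α hs] at hq
  rw [Real.div_rpow hs.le hR.le, Real.div_rpow hs.le hR.le]
  rw [Real.rpow_add_one hs.ne', Real.rpow_add_one hR.ne'] at hq ⊢
  field_simp
  linear_combination -hq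

end GaugeProfile

theorem distortion_cancellation_general (m k : ℕ)
    (α : ℝ) (hα : 0 < α) (p : ℝ)
    (Φ : Euc m → ℝ) (Ψ : Euc k → ℝ) (hΦ : IsMinkowskiNorm Φ) (hΨ : IsMinkowskiNorm Ψ) :
    ∀ x : Euc m × Euc k, x ≠ 0 → x.1 ≠ 0 → x.2 ≠ 0 →
      Φ (gradZ (rho α Φ Ψ) x) *
        ⟪gradient Φ (gradZ (rho α Φ Ψ) x),
          gradZ (fun y => (dualNorm Φ y.1 / rho α Φ Ψ y) ^ (α * (p - 2))) x⟫
      + dualNorm Φ x.1 ^ (2 * α) / 4 * Ψ (gradS (rho α Φ Ψ) x) *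
        ⟪gradient Ψ (gradS (rho α Φ Ψ) x),
          gradS (fun y => (dualNorm Φ y.1 / rho α Φ Ψ y) ^ (α * (p - 2))) x⟫ = 0 := by
  intro x _ hz hσ
  have hu := hΦ.dualNorm_pos hz
  have hv := hΨ.dualNorm_pos hσ
  set u := dualNorm Φ x.1
  set v := dualNorm Ψ x.2
  set R := gaugeProfile α u v
  have hα1 : α + 1 ≠ 0 := by positivity
  have hR : 0 < R := gaugeProfile_pos hu v
  have hRs := hasDerivAt_gaugeProfile_fst hα1 hu v
  have hRt := hasDerivAt_gaugeProfile_snd hα1 hu v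
  have hWs := ((hasDerivAt_id' u).fun_div hRs hR.ne').rpow_const (p := α * (p - 2))
    (Or.inl (div_pos hu hR).ne')
  have hWt := ((hasDerivAt_const v u).fun_div hRt hR.ne').rpow_const (p := α * (p - 2))
    (Or.inl (div_pos hu hR).ne')
  refine (pairing_comp_dualNorm (F := gaugeProfile α)
    (G := fun s t => (s / gaugeProfile α s t) ^ (α * (p - 2))) hΦ hΨ hz hσ hRs hRt hWs hWt
    (by positivity) (by positivity) _).trans ?_
  have hRR : R * (u / R) ^ (2 * α + 1) = u * (u / R) ^ (2 * α) := by
    rw [Real.rpow_add_one (div_pos hu hR).ne']; field_simp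
  linear_combination (α * (p - 2) * (u / R) ^ (α * (p - 2) - 1) / R ^ 2) *
    (hRR - u * gaugeProfile_eikonal hα1 hu v)

/-- The cancellation identity:
`Φ(∇_z ρ)⟨∇Φ(∇_z ρ), ∇_z[(Φ⁰(z)/ρ)^{α(p−2)}]⟩
 + (Φ⁰(z)^{2α}/4)Ψ(∇_σ ρ)⟨∇Ψ(∇_σ ρ), ∇_σ[(Φ⁰(z)/ρ)^{α(p−2)}]⟩ = 0`. -/
theorem distortion_cancellation (m k : ℕ) (hm : 1 ≤ m) (hk : 1 ≤ k)
    (α : ℝ) (hα : 0 < α) (p : ℝ) (hp : 1 < p)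
    (Φ : Euc m → ℝ) (Ψ : Euc k → ℝ) (hΦ : IsMinkowskiNorm Φ) (hΨ : IsMinkowskiNorm Ψ) :
    ∀ x : Euc m × Euc k, x ≠ 0 → x.1 ≠ 0 → x.2 ≠ 0 →
      Φ (gradZ (rho α Φ Ψ) x) *
        ⟪gradient Φ (gradZ (rho α Φ Ψ) x),
          gradZ (fun y => (dualNorm Φ y.1 / rho α Φ Ψ y) ^ (α * (p - 2))) x⟫
      + dualNorm Φ x.1 ^ (2 * α) / 4 * Ψ (gradS (rho α Φ Ψ) x) *
        ⟪gradient Ψ (gradS (rho α Φ Ψ) x),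
          gradS (fun y => (dualNorm Φ y.1 / rho α Φ Ψ y) ^ (α * (p - 2))) x⟫ = 0 :=
  distortion_cancellation_general m k α hα p Φ Ψ hΦ hΨ
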